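/- arXiv:2202.00261 — 2 statements merged into one kernel-verified Lean document; each statement's English description precedes it below -/
import Mathlib

section
/- Let H₁ and H₂ be subgroups of SO(3) viewed inside O(3), and Z₂ᶜ = {I, -I}. Then for any g ∈ O(3), H₁ ∩ g(H₂ ∪ (-H₂))g⁻¹ = H₁ ∩ g'H₂g'⁻¹ for some g' ∈ SO(3); hence the clips [H₁] ⊚ [H₂ ⊕ Z₂ᶜ] (computed in O(3)) equals [H₁] ⊚ [H₂] (computed in SO(3)). -/
open Matrix
open scoped Real Pointwise

abbrev O3 := Matrix.orthogonalGroup (Fin 3) ℝ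

def SO3 : Subgroup O3 where
  carrier := {A | (A : Matrix (Fin 3) (Fin 3) ℝ).det = 1}
  one_mem' := by simp
  mul_mem' := by
    intro a b ha hb
    simp only [Set.mem_setOf_eq] at *
    rw [Submonoid.coe_mul, Matrix.det_mul, ha, hb, one_mul]
  inv_mem' := by
    intro a ha
    simp only [Set.mem_setOf_eq] at *
    have h : ((a⁻¹ : O3) : Matrix (Fin 3) (Fin 3) ℝ) = star (a : Matrix (Fin 3) (Fin 3) ℝ) := rfl
    rw [h, Matrix.star_eq_conjTranspose, Matrix.det_conjTranspose]; simpa using ha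

def negI : O3 := ⟨-1, by constructor <;> simp⟩

lemma negI_mul_comm (x : O3) : negI * x = x * negI := Subtype.ext <| by
  show (-1 : Matrix (Fin 3) (Fin 3) ℝ) * x = (x : Matrix (Fin 3) (Fin 3) ℝ) * (-1)
  simp

lemma negI_sq : negI * negI = 1 := Subtype.ext <| by
  show (-1 : Matrix (Fin 3) (Fin 3) ℝ) * (-1) = 1
  simp

/-- `-S = {-g : g ∈ S}` -/
def negSet (S : Set O3) : Set O3 := (fun x => negI * x) '' S

def HZ (H : Subgroup O3) : Subgroup O3 where
  carrier := (H : Set O3) ∪ negSet (H : Set O3)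
  one_mem' := Or.inl H.one_mem
  mul_mem' := by
    rintro a b (ha | ⟨a', ha', rfl⟩) (hb | ⟨b', hb', rfl⟩)
    · exact Or.inl (H.mul_mem ha hb)
    · exact Or.inr ⟨a * b', H.mul_mem ha hb', by rw [← mul_assoc, ← negI_mul_comm, mul_assoc]⟩
    · exact Or.inr ⟨a' * b, H.mul_mem ha' hb, by rw [mul_assoc]⟩
    · refine Or.inl ?_
      have h : negI * a' * (negI * b') = a' * b' := by
        rw [negI_mul_comm a', mul_assoc a', ← mul_assoc negI, negI_sq, one_mul]
      rw [h]; exact H.mul_mem ha' hb'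
  inv_mem' := by
    rintro a (ha | ⟨a', ha', rfl⟩)
    · exact Or.inl (H.inv_mem ha)
    · refine Or.inr ⟨a'⁻¹, H.inv_mem ha', ?_⟩
      show negI * a'⁻¹ = (negI * a')⁻¹
      have hinv : negI⁻¹ = negI := by
        rw [eq_comm, eq_inv_iff_mul_eq_one, negI_sq]
      rw [_root_.mul_inv_rev, hinv, ← negI_mul_comm a'⁻¹]

noncomputable def RzM (θ : ℝ) : Matrix (Fin 3) (Fin 3) ℝ :=
  !![Real.cos θ, -Real.sin θ, 0; Real.sin θ, Real.cos θ, 0; 0, 0, 1]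

lemma RzM_mem (θ : ℝ) : RzM θ ∈ Matrix.orthogonalGroup (Fin 3) ℝ := by
  constructor
  · ext i j
    fin_cases i <;> fin_cases j <;>
      simp [RzM, Matrix.mul_apply, Fin.sum_univ_succ, Matrix.one_apply, mul_comm] <;>
      nlinarith [Real.sin_sq_add_cos_sq θ]
  · ext i j
    fin_cases i <;> fin_cases j <;>
      simp [RzM, Matrix.mul_apply, Fin.sum_univ_succ, Matrix.one_apply, mul_comm] <;>
      nlinarith [Real.sin_sq_add_cos_sq θ]

noncomputable def Rz (θ : ℝ) : O3 := ⟨RzM θ, RzM_mem θ⟩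

def e1 : Fin 3 → ℝ := ![1, 0, 0]
def e2 : Fin 3 → ℝ := ![0, 1, 0]
def e3 : Fin 3 → ℝ := ![0, 0, 1]

/-- rotation by `π` about the unit axis `u` (Rodrigues: `2uuᵀ - I`) -/
noncomputable def RpiM (u : Fin 3 → ℝ) : Matrix (Fin 3) (Fin 3) ℝ :=
  (2 : ℝ) • Matrix.vecMulVec u u - 1

lemma RpiM_mem (u : Fin 3 → ℝ) (hu : u ⬝ᵥ u = 1) :
    RpiM u ∈ Matrix.orthogonalGroup (Fin 3) ℝ := by
  have h3 : u 0 * u 0 + u 1 * u 1 + u 2 * u 2 = 1 := by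
    simpa [dotProduct, Fin.sum_univ_three] using hu
  have key : RpiM u * RpiM u = 1 := by
    ext i j
    simp only [RpiM, Matrix.mul_apply, Matrix.sub_apply, Matrix.smul_apply,
      Matrix.vecMulVec_apply, smul_eq_mul, Fin.sum_univ_three]
    fin_cases i <;> fin_cases j <;> simp [Matrix.one_apply] <;>
      first
        | linear_combination (4 * u 0 * u 0) * h3
        | linear_combination (4 * u 1 * u 1) * h3
        | linear_combination (4 * u 2 * u 2) * h3
        | linear_combination (4 * u 0 * u 1) * h3
        | linear_combination (4 * u 0 * u 2) * h3
        | linear_combination (4 * u 1 * u 2) * h3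
  have hsym : star (RpiM u) = RpiM u := by
    rw [Matrix.star_eq_conjTranspose]
    ext i j
    by_cases h : i = j
    · subst h; simp [RpiM, Matrix.conjTranspose_apply, Matrix.vecMulVec_apply]
    · simp [RpiM, Matrix.conjTranspose_apply, Matrix.vecMulVec_apply, Matrix.one_apply, h,
        Ne.symm h]
      ring
  exact ⟨by rw [hsym]; exact key, by rw [hsym]; exact key⟩

noncomputable def Rpi (u : Fin 3 → ℝ) (hu : u ⬝ᵥ u = 1) : O3 := ⟨RpiM u, RpiM_mem u hu⟩

def conjS (g : O3) (H : Subgroup O3) : Subgroup O3 := H.map (MulAut.conj g).toMonoidHom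

def cclass (H : Subgroup O3) : Set (Subgroup O3) := Set.range fun g : O3 => conjS g H

def clips (H K : Subgroup O3) : Set (Set (Subgroup O3)) :=
  Set.range fun g : O3 => cclass (H ⊓ conjS g K)

def conjSet (g : O3) (S : Set O3) : Set O3 := (fun x => g * x * g⁻¹) '' S

lemma e1_unit : e1 ⬝ᵥ e1 = 1 := by norm_num [e1, dotProduct, Fin.sum_univ_three, Matrix.cons_val_two, Matrix.vecHead, Matrix.vecTail]
lemma e2_unit : e2 ⬝ᵥ e2 = 1 := by norm_num [e2, dotProduct, Fin.sum_univ_three, Matrix.cons_val_two, Matrix.vecHead, Matrix.vecTail]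
lemma e3_unit : e3 ⬝ᵥ e3 = 1 := by norm_num [e3, dotProduct, Fin.sum_univ_three, Matrix.cons_val_two, Matrix.vecHead, Matrix.vecTail]


lemma det_negI : ((negI : O3) : Matrix (Fin 3) (Fin 3) ℝ).det = -1 := by
  show (-1 : Matrix (Fin 3) (Fin 3) ℝ).det = -1
  simp [Matrix.det_neg]
  norm_num

lemma det_pm (g : O3) : ((g : O3) : Matrix (Fin 3) (Fin 3) ℝ).det = 1 ∨
    ((g : O3) : Matrix (Fin 3) (Fin 3) ℝ).det = -1 := by
  have h := g.2.1
  have : ((g : Matrix (Fin 3) (Fin 3) ℝ).det) * ((g : Matrix (Fin 3) (Fin 3) ℝ).det) = 1 := by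
    have := congrArg Matrix.det h
    rwa [Matrix.det_mul, Matrix.star_eq_conjTranspose, Matrix.det_conjTranspose,
      Matrix.det_one] at this
  rcases mul_self_eq_one_iff.mp this with h | h
  · exact Or.inl h
  · exact Or.inr h

lemma inf_HZ_eq (H₁ H₂ : Subgroup O3) (h₁ : H₁ ≤ SO3) (h₂ : H₂ ≤ SO3) (g : O3) :
    H₁ ⊓ conjS g (HZ H₂) = H₁ ⊓ conjS g H₂ := by
  apply le_antisymm
  · rintro x ⟨hx1, y, hy, rfl⟩
    rcases hy with hy | ⟨y', hy', rfl⟩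
    · exact ⟨hx1, y, hy, rfl⟩
    · exfalso
      have hdx : ((MulAut.conj g) (negI * y') : Matrix (Fin 3) (Fin 3) ℝ).det = 1 := h₁ hx1
      have : ((MulAut.conj g) (negI * y') : Matrix (Fin 3) (Fin 3) ℝ).det
          = ((negI * y' : O3) : Matrix (Fin 3) (Fin 3) ℝ).det := by
        show ((g * (negI * y') * g⁻¹ : O3) : Matrix (Fin 3) (Fin 3) ℝ).det = _
        rcases det_pm g with h | h <;>
          · have hgi : ((g⁻¹ : O3) : Matrix (Fin 3) (Fin 3) ℝ) =
                star (g : Matrix (Fin 3) (Fin 3) ℝ) := rfl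
            simp [Submonoid.coe_mul, Matrix.det_mul, hgi, Matrix.star_eq_conjTranspose,
              Matrix.det_conjTranspose, h]
            try ring
      have hneg : ((negI * y' : O3) : Matrix (Fin 3) (Fin 3) ℝ).det = -1 := by
        have hy'd : ((y' : O3) : Matrix (Fin 3) (Fin 3) ℝ).det = 1 := h₂ hy'
        rw [Submonoid.coe_mul, Matrix.det_mul, det_negI, hy'd]; ring
      rw [this, hneg] at hdx
      norm_num at hdx
  · rintro x ⟨hx1, y, hy, rfl⟩
    exact ⟨hx1, y, Or.inl hy, rfl⟩

lemma conj_negI (x : O3) : negI * x * negI = x := by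
  rw [negI_mul_comm, mul_assoc, negI_sq, mul_one]

lemma negI_inv : (negI : O3)⁻¹ = negI := by
  rw [eq_comm, eq_inv_iff_mul_eq_one]; exact negI_sq

lemma conjS_key (g y : O3) : negI * g * y * (negI * g)⁻¹ = g * y * g⁻¹ := by
  rw [_root_.mul_inv_rev, negI_inv]
  have h : negI * g * y * (g⁻¹ * negI) = negI * (g * y * g⁻¹) * negI := by group
  rw [h, conj_negI]

lemma conjS_negI_mul (g : O3) (K : Subgroup O3) : conjS (negI * g) K = conjS g K := by
  have h : MulAut.conj (negI * g : O3) = MulAut.conj g := by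
    refine MulEquiv.ext fun y => ?_
    simp only [MulAut.conj_apply]
    exact conjS_key g y
  unfold conjS
  rw [h]

lemma exists_g' (H₁ H₂ : Subgroup O3) (h₁ : H₁ ≤ SO3) (h₂ : H₂ ≤ SO3) (g : O3) :
    ∃ g' : O3, g' ∈ SO3 ∧ H₁ ⊓ conjS g (HZ H₂) = H₁ ⊓ conjS g' H₂ := by
  rcases det_pm g with h | h
  · exact ⟨g, h, inf_HZ_eq H₁ H₂ h₁ h₂ g⟩
  · refine ⟨negI * g, ?_, ?_⟩
    · show ((negI * g : O3) : Matrix (Fin 3) (Fin 3) ℝ).det = 1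
      rw [Submonoid.coe_mul, Matrix.det_mul, det_negI, h]; ring
    · rw [conjS_negI_mul, inf_HZ_eq H₁ H₂ h₁ h₂ g]

/-- For subgroups `H₁, H₂ ≤ SO(3)` and any `g ∈ O(3)`, the intersection
`H₁ ∩ g(H₂ ∪ (-H₂))g⁻¹` equals `H₁ ∩ g'H₂g'⁻¹` for some `g' ∈ SO(3)`; hence
`[H₁] ⊚ [H₂ ⊕ Z₂ᶜ] = [H₁] ⊚ [H₂]` computed over `SO(3)`. -/
theorem clips_typeI_typeII (H₁ H₂ : Subgroup O3) (h₁ : H₁ ≤ SO3) (h₂ : H₂ ≤ SO3) :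
    (∀ g : O3, ∃ g' : O3, g' ∈ SO3 ∧ H₁ ⊓ conjS g (HZ H₂) = H₁ ⊓ conjS g' H₂) ∧
    clips H₁ (HZ H₂) = Set.range fun g' : SO3 => cclass (H₁ ⊓ conjS (g' : O3) H₂) := by
  constructor
  · exact exists_g' H₁ H₂ h₁ h₂
  · ext S
    constructor
    · rintro ⟨g, rfl⟩
      obtain ⟨g', hg', heq⟩ := exists_g' H₁ H₂ h₁ h₂ g
      exact ⟨⟨g', hg'⟩, by simp [heq]⟩
    · rintro ⟨⟨g', hg'⟩, rfl⟩
      exact ⟨g', by simp [inf_HZ_eq H₁ H₂ h₁ h₂ g']⟩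
end

section
/- Let n ≥ 1, let Z₂ₙ⁻ = Zₙ ∪ (-γZₙ) with γ = R(e₃, π/n), and let SO(2) be the group of all rotations about the z-axis. Then for g ∈ SO(3): if g·e₃ = ±e₃ then Z₂ₙ⁻ ∩ (g·SO(2)·g⁻¹ ∪ (-g·SO(2)·g⁻¹)) = Z₂ₙ⁻, and otherwise this intersection is trivial. Hence [Z₂ₙ⁻] ⊚ [SO(2) ⊕ Z₂ᶜ] = {[1], [Z₂ₙ⁻]}. -/
open Matrix
open scoped Real Pointwise

set_option maxHeartbeats 2000000

lemma Rz_mul (a b : ℝ) : Rz a * Rz b = Rz (a + b) := Subtype.ext <| by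
  show RzM a * RzM b = RzM (a + b)
  ext i j
  fin_cases i <;> fin_cases j <;>
    simp [RzM, Matrix.mul_apply, Fin.sum_univ_three, Real.cos_add, Real.sin_add] <;> ring

lemma Rz_zero : Rz 0 = 1 := Subtype.ext <| by
  show RzM 0 = 1
  ext i j
  fin_cases i <;> fin_cases j <;> simp [RzM, Matrix.one_apply, Matrix.vecHead, Matrix.vecTail]

lemma Rz_inv (a : ℝ) : (Rz a)⁻¹ = Rz (-a) := by
  apply inv_eq_of_mul_eq_one_right
  rw [Rz_mul]; simpa using Rz_zero

lemma Rz_pow (a : ℝ) (m : ℕ) : Rz a ^ m = Rz (m * a) := by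
  induction m with
  | zero => simpa using Rz_zero.symm
  | succ m ih => rw [pow_succ, ih, Rz_mul]; congr 1; push_cast; ring

lemma Rz_zpow (a : ℝ) (k : ℤ) : Rz a ^ k = Rz (k * a) := by
  cases k with
  | ofNat m => rw [Int.ofNat_eq_coe, zpow_natCast, Rz_pow]; norm_num
  | negSucc m => rw [zpow_negSucc, Rz_pow, Rz_inv]; congr 1; push_cast; ring

lemma RzM_det (θ : ℝ) : (RzM θ).det = 1 := by
  rw [Matrix.det_fin_three]; simp [RzM]
  nlinarith [Real.sin_sq_add_cos_sq θ]
section Comm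
variable (g : O3)

lemma entries_fix (hdet : (g : Matrix (Fin 3) (Fin 3) ℝ).det = 1)
    (h3 : (g : Matrix (Fin 3) (Fin 3) ℝ).mulVec e3 = e3) :
    ∀ θ : ℝ, g * Rz θ = Rz θ * g := by
  intro θ
  set A := (g : Matrix (Fin 3) (Fin 3) ℝ) with hA
  have hu1 : star A * A = 1 := g.2.1
  have hu2 : A * star A = 1 := g.2.2
  have h02 : A 0 2 = 0 := by
    have := congrFun h3 0
    simpa [Matrix.mulVec, dotProduct, Fin.sum_univ_three, e3, Matrix.vecHead, Matrix.vecTail] using this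
  have h12 : A 1 2 = 0 := by
    have := congrFun h3 1
    simpa [Matrix.mulVec, dotProduct, Fin.sum_univ_three, e3, Matrix.vecHead, Matrix.vecTail] using this
  have h22 : A 2 2 = 1 := by
    have := congrFun h3 2
    simpa [Matrix.mulVec, dotProduct, Fin.sum_univ_three, e3, Matrix.vecHead, Matrix.vecTail] using this
  have hrow2 : A 2 0 * A 2 0 + A 2 1 * A 2 1 + A 2 2 * A 2 2 = 1 := by
    have := congrFun (congrFun hu2 2) 2
    simpa [Matrix.mul_apply, Fin.sum_univ_three, Matrix.one_apply,
      Matrix.star_eq_conjTranspose, Matrix.conjTranspose_apply] using this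
  have h20 : A 2 0 = 0 := by nlinarith [sq_nonneg (A 2 0), sq_nonneg (A 2 1)]
  have h21 : A 2 1 = 0 := by nlinarith [sq_nonneg (A 2 0), sq_nonneg (A 2 1)]
  have hcol0 : A 0 0 * A 0 0 + A 1 0 * A 1 0 = 1 := by
    have := congrFun (congrFun hu1 0) 0
    simp [Matrix.mul_apply, Fin.sum_univ_three, Matrix.one_apply,
      Matrix.star_eq_conjTranspose, Matrix.conjTranspose_apply, h20] at this
    linarith
  have horth : A 0 0 * A 0 1 + A 1 0 * A 1 1 = 1 - 1 := by
    have := congrFun (congrFun hu1 0) 1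
    simp [Matrix.mul_apply, Fin.sum_univ_three, Matrix.one_apply,
      Matrix.star_eq_conjTranspose, Matrix.conjTranspose_apply, h20, h21] at this
    linarith
  have hdet3 : A 0 0 * A 1 1 - A 0 1 * A 1 0 = 1 := by
    rw [Matrix.det_fin_three] at hdet
    rw [h02, h12, h22, h20, h21] at hdet
    linarith
  have hd : A 1 1 = A 0 0 := by
    linear_combination (-(A 1 1)) * hcol0 + (A 0 0) * hdet3 + (A 1 0) * horth
  have hb : A 0 1 = -(A 1 0) := by
    linear_combination (-(A 0 1)) * hcol0 + (A 0 0) * horth - (A 1 0) * hdet3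
  apply Subtype.ext
  show A * RzM θ = RzM θ * A
  ext i j
  fin_cases i <;> fin_cases j <;>
    simp [RzM, Matrix.mul_apply, Fin.sum_univ_three, h02, h12, h22, h20, h21, hd, hb] <;> ring

lemma entries_flip (hdet : (g : Matrix (Fin 3) (Fin 3) ℝ).det = 1)
    (h3 : (g : Matrix (Fin 3) (Fin 3) ℝ).mulVec e3 = -e3) :
    ∀ θ : ℝ, g * Rz θ = Rz (-θ) * g := by
  intro θ
  set A := (g : Matrix (Fin 3) (Fin 3) ℝ) with hA
  have hu1 : star A * A = 1 := g.2.1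
  have hu2 : A * star A = 1 := g.2.2
  have h02 : A 0 2 = 0 := by
    have := congrFun h3 0
    simpa [Matrix.mulVec, dotProduct, Fin.sum_univ_three, e3, Matrix.vecHead, Matrix.vecTail] using this
  have h12 : A 1 2 = 0 := by
    have := congrFun h3 1
    simpa [Matrix.mulVec, dotProduct, Fin.sum_univ_three, e3, Matrix.vecHead, Matrix.vecTail] using this
  have h22 : A 2 2 = -1 := by
    have := congrFun h3 2
    simpa [Matrix.mulVec, dotProduct, Fin.sum_univ_three, e3, Matrix.vecHead, Matrix.vecTail] using this
  have hrow2 : A 2 0 * A 2 0 + A 2 1 * A 2 1 + A 2 2 * A 2 2 = 1 := by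
    have := congrFun (congrFun hu2 2) 2
    simpa [Matrix.mul_apply, Fin.sum_univ_three, Matrix.one_apply,
      Matrix.star_eq_conjTranspose, Matrix.conjTranspose_apply] using this
  have h20 : A 2 0 = 0 := by nlinarith [sq_nonneg (A 2 0), sq_nonneg (A 2 1)]
  have h21 : A 2 1 = 0 := by nlinarith [sq_nonneg (A 2 0), sq_nonneg (A 2 1)]
  have hcol0 : A 0 0 * A 0 0 + A 1 0 * A 1 0 = 1 := by
    have := congrFun (congrFun hu1 0) 0
    simp [Matrix.mul_apply, Fin.sum_univ_three, Matrix.one_apply,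
      Matrix.star_eq_conjTranspose, Matrix.conjTranspose_apply, h20] at this
    linarith
  have horth : A 0 0 * A 0 1 + A 1 0 * A 1 1 = 1 - 1 := by
    have := congrFun (congrFun hu1 0) 1
    simp [Matrix.mul_apply, Fin.sum_univ_three, Matrix.one_apply,
      Matrix.star_eq_conjTranspose, Matrix.conjTranspose_apply, h20, h21] at this
    linarith
  have hdet3 : A 0 0 * A 1 1 - A 0 1 * A 1 0 = -1 := by
    rw [Matrix.det_fin_three] at hdet
    rw [h02, h12, h22, h20, h21] at hdet
    linarith
  have hd : A 1 1 = -(A 0 0) := by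
    linear_combination (-(A 1 1)) * hcol0 + (A 0 0) * hdet3 + (A 1 0) * horth
  have hb : A 0 1 = A 1 0 := by
    linear_combination (-(A 0 1)) * hcol0 + (A 0 0) * horth - (A 1 0) * hdet3
  apply Subtype.ext
  show A * RzM θ = RzM (-θ) * A
  ext i j
  fin_cases i <;> fin_cases j <;>
    simp [RzM, Matrix.mul_apply, Fin.sum_univ_three, Real.cos_neg, Real.sin_neg,
      h02, h12, h22, h20, h21, hd, hb] <;> ring

end Comm
lemma coe_inv_o3 (g : O3) : ((g⁻¹ : O3) : Matrix (Fin 3) (Fin 3) ℝ) = star (g : Matrix (Fin 3) (Fin 3) ℝ) := rfl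

lemma det_conj (g y : O3) :
    ((g * y * g⁻¹ : O3) : Matrix (Fin 3) (Fin 3) ℝ).det
      = ((y : O3) : Matrix (Fin 3) (Fin 3) ℝ).det := by
  have hc : ((g * y * g⁻¹ : O3) : Matrix (Fin 3) (Fin 3) ℝ)
      = (g : Matrix (Fin 3) (Fin 3) ℝ) * (y : Matrix (Fin 3) (Fin 3) ℝ) * star (g : Matrix (Fin 3) (Fin 3) ℝ) := by
    rw [Submonoid.coe_mul, Submonoid.coe_mul, coe_inv_o3]
  rw [hc, Matrix.det_mul, Matrix.det_mul, Matrix.star_eq_conjTranspose, Matrix.det_conjTranspose]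
  simp only [star_trivial]
  have h1 : ((g : Matrix (Fin 3) (Fin 3) ℝ).det) * ((g : Matrix (Fin 3) (Fin 3) ℝ).det) = 1 := by
    have hu1 : star (g : Matrix (Fin 3) (Fin 3) ℝ) * g = 1 := g.2.1
    have := congrArg Matrix.det hu1
    rwa [Matrix.det_mul, Matrix.star_eq_conjTranspose, Matrix.det_conjTranspose, Matrix.det_one] at this
  linear_combination ((y : O3) : Matrix (Fin 3) (Fin 3) ℝ).det * h1

lemma coe_negI_mul (y : O3) : ((negI * y : O3) : Matrix (Fin 3) (Fin 3) ℝ) = -(y : Matrix (Fin 3) (Fin 3) ℝ) := by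
  rw [Submonoid.coe_mul]; show (-1 : Matrix (Fin 3) (Fin 3) ℝ) * _ = _; rw [neg_one_mul]

lemma det_negI_Rz (θ : ℝ) : ((negI * Rz θ : O3) : Matrix (Fin 3) (Fin 3) ℝ).det = -1 := by
  rw [coe_negI_mul, Matrix.det_neg]
  show (-1)^(3:ℕ) * (RzM θ).det = -1
  rw [RzM_det]; norm_num

lemma conj_negI_mul (g x : O3) : (negI * g) * x * (negI * g)⁻¹ = g * x * g⁻¹ := by
  have hinv : negI⁻¹ = negI := by rw [eq_comm, eq_inv_iff_mul_eq_one, negI_sq]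
  rw [_root_.mul_inv_rev, hinv]
  calc negI * g * x * (g⁻¹ * negI) = negI * (g * x * g⁻¹) * negI := by group
    _ = (g * x * g⁻¹) * negI * negI := by rw [negI_mul_comm]
    _ = g * x * g⁻¹ := by rw [mul_assoc, negI_sq, mul_one]

/-- `Rz θ` fixes `g·e₃` forces `cos θ = 1, sin θ = 0` when `g·e₃ ≠ ±e₃`. -/
lemma cos_one_of_conj (g : O3) (θ ψ : ℝ)
    (hne : ¬((g : Matrix (Fin 3) (Fin 3) ℝ).mulVec e3 = e3 ∨
        (g : Matrix (Fin 3) (Fin 3) ℝ).mulVec e3 = -e3))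
    (heq : Rz θ = g * Rz ψ * g⁻¹) :
    Real.cos θ = 1 ∧ Real.sin θ = 0 := by
  set A := (g : Matrix (Fin 3) (Fin 3) ℝ) with hA
  set v := A.mulVec e3 with hv
  have hmul : Rz θ * g = g * Rz ψ := by rw [heq]; group
  have hmulM : RzM θ * A = A * RzM ψ := by
    have := congrArg (fun z : O3 => (z : Matrix (Fin 3) (Fin 3) ℝ)) hmul
    exact this
  have hRze3 : (RzM ψ).mulVec e3 = e3 := by
    funext i; fin_cases i <;>
      simp [RzM, Matrix.mulVec, dotProduct, Fin.sum_univ_three, e3, Matrix.vecHead, Matrix.vecTail]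
  have hfix : (RzM θ).mulVec v = v := by
    rw [hv, Matrix.mulVec_mulVec, hmulM, ← Matrix.mulVec_mulVec, hRze3]
  have h0 : Real.cos θ * v 0 - Real.sin θ * v 1 = v 0 := by
    have := congrFun hfix 0
    simp [RzM, Matrix.mulVec, dotProduct, Fin.sum_univ_three, Matrix.vecHead, Matrix.vecTail] at this
    linarith
  have h1 : Real.sin θ * v 0 + Real.cos θ * v 1 = v 1 := by
    have := congrFun hfix 1
    simp [RzM, Matrix.mulVec, dotProduct, Fin.sum_univ_three, Matrix.vecHead, Matrix.vecTail] at this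
    linarith
  have hunit : v 0 * v 0 + v 1 * v 1 + v 2 * v 2 = 1 := by
    have hu1 : star A * A = 1 := g.2.1
    have hvk : ∀ k, v k = A k 2 := by
      intro k; rw [hv]; simp [Matrix.mulVec, dotProduct, Fin.sum_univ_three, e3, Matrix.vecHead, Matrix.vecTail]
    have := congrFun (congrFun hu1 2) 2
    simp [Matrix.mul_apply, Fin.sum_univ_three, Matrix.one_apply,
      Matrix.star_eq_conjTranspose, Matrix.conjTranspose_apply] at this
    rw [hvk 0, hvk 1, hvk 2]; linarith
  have hcos : Real.cos θ = 1 := by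
    by_contra hc
    have hz : v 0 * v 0 + v 1 * v 1 = 0 := by
      have key : (Real.cos θ - 1) * (v 0 * v 0 + v 1 * v 1) = 0 := by
        linear_combination v 0 * h0 + v 1 * h1
      rcases mul_eq_zero.mp key with h | h
      · exact absurd (by linarith : Real.cos θ = 1) hc
      · exact h
    have hv0 : v 0 = 0 := by nlinarith [sq_nonneg (v 0), sq_nonneg (v 1)]
    have hv1 : v 1 = 0 := by nlinarith [sq_nonneg (v 0), sq_nonneg (v 1)]
    have hv2 : v 2 = 1 ∨ v 2 = -1 := by
      rcases mul_self_eq_one_iff.mp (by linarith : v 2 * v 2 = 1) with h | h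
      · exact Or.inl h
      · exact Or.inr h
    apply hne
    rcases hv2 with h | h
    · left; funext i; fin_cases i <;> simp [← hv, hv0, hv1, h, e3]
    · right; funext i; fin_cases i <;> simp [← hv, hv0, hv1, h, e3]
  refine ⟨hcos, ?_⟩
  have : Real.sin θ ^ 2 = 0 := by nlinarith [Real.sin_sq_add_cos_sq θ]
  exact pow_eq_zero_iff (by norm_num) |>.mp this

lemma Rz_eq_one (θ : ℝ) (hc : Real.cos θ = 1) (hs : Real.sin θ = 0) : Rz θ = 1 := by
  apply Subtype.ext
  show RzM θ = 1
  ext i j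
  fin_cases i <;> fin_cases j <;>
    simp [RzM, Matrix.one_apply, hc, hs, Matrix.vecHead, Matrix.vecTail]
def g0 : O3 := ⟨!![0,0,1;0,-1,0;1,0,0], by
  constructor <;>
    · ext i j
      fin_cases i <;> fin_cases j <;>
        simp [Matrix.mul_apply, Fin.sum_univ_three, Matrix.one_apply,
          Matrix.star_eq_conjTranspose, Matrix.conjTranspose_apply,
          Matrix.transpose_apply, Matrix.vecHead, Matrix.vecTail]⟩

lemma g0_det : ((g0 : O3) : Matrix (Fin 3) (Fin 3) ℝ).det = 1 := by
  show (!![0,0,1;0,-1,0;1,0,0] : Matrix (Fin 3) (Fin 3) ℝ).det = 1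
  rw [Matrix.det_fin_three]; norm_num [Matrix.vecHead, Matrix.vecTail, Matrix.cons_val_two]

lemma g0_SO3 : g0 ∈ SO3 := g0_det

lemma g0_cond : ¬(((g0 : O3) : Matrix (Fin 3) (Fin 3) ℝ).mulVec e3 = e3 ∨
    ((g0 : O3) : Matrix (Fin 3) (Fin 3) ℝ).mulVec e3 = -e3) := by
  have hval : ((g0 : O3) : Matrix (Fin 3) (Fin 3) ℝ).mulVec e3 0 = 1 := by
    show (!![0,0,1;0,-1,0;1,0,0] : Matrix (Fin 3) (Fin 3) ℝ).mulVec e3 0 = 1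
    simp [Matrix.mulVec, dotProduct, Fin.sum_univ_three, e3, Matrix.vecHead, Matrix.vecTail]
  rintro (h | h)
  · rw [h] at hval; simp [e3] at hval
  · rw [h] at hval; simp [e3] at hval

lemma one_cond : ((1 : O3) : Matrix (Fin 3) (Fin 3) ℝ).mulVec e3 = e3 ∨
    ((1 : O3) : Matrix (Fin 3) (Fin 3) ℝ).mulVec e3 = -e3 := by
  left
  show (1 : Matrix (Fin 3) (Fin 3) ℝ).mulVec e3 = e3
  simp

lemma parity_contra (n : ℕ) (hn : 1 ≤ n) (k : ℤ) (θ : ℝ)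
    (hθ : θ = Real.pi / n + k * (2 * Real.pi / n)) (hc : Real.cos θ = 1) : False := by
  obtain ⟨m, hm⟩ := (Real.cos_eq_one_iff θ).mp hc
  rw [hθ] at hm
  have hn0 : (n : ℝ) ≠ 0 := Nat.cast_ne_zero.mpr (by omega)
  have hπ : Real.pi ≠ 0 := Real.pi_ne_zero
  have hmain : Real.pi * (2 * m * n) = Real.pi * (1 + 2 * k) := by
    have h2 : (n : ℝ) * ((m : ℝ) * (2 * Real.pi))
        = (n : ℝ) * (Real.pi / n + k * (2 * Real.pi / n)) := by rw [hm]
    field_simp at h2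
    rw [show (2 * m * n : ℝ) = 1 + 2 * k by linarith]
  have hZ : (2 * m * n : ℤ) = 1 + 2 * k := by
    have := mul_left_cancel₀ hπ hmain
    exact_mod_cast this
  have hdvd : (2 : ℤ) ∣ 1 + 2 * k := ⟨m * n, by linarith⟩
  omega
lemma mem_HZ_iff (H : Subgroup O3) (x : O3) :
    x ∈ HZ H ↔ x ∈ (H : Set O3) ∪ negSet (H : Set O3) := Iff.rfl

lemma conj_negI_inner (g y : O3) : g * (negI * y) * g⁻¹ = negI * (g * y * g⁻¹) := by
  have h1 : g * (negI * y) = negI * (g * y) := by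
    rw [← mul_assoc, ← negI_mul_comm g, mul_assoc]
  rw [h1]; group

lemma mem_conjS_iff (g : O3) (K : Subgroup O3) (x : O3) :
    x ∈ conjS g K ↔ ∃ y ∈ K, g * y * g⁻¹ = x := by
  simp only [conjS, Subgroup.mem_map, MulEquiv.coe_toMonoidHom, MulAut.conj_apply]


/-- For `Z₂ₙ⁻ = Zₙ ∪ (-R(e₃,π/n))Zₙ` and `SO(2)` the rotations about the
`z`-axis: for `g ∈ SO(3)`, the intersection `Z₂ₙ⁻ ∩ g(SO(2) ⊕ Z₂ᶜ)g⁻¹` is `Z₂ₙ⁻` when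
`g·e₃ = ±e₃` and trivial otherwise; hence `[Z₂ₙ⁻] ⊚ [SO(2) ⊕ Z₂ᶜ] = {[1], [Z₂ₙ⁻]}`. -/
theorem clips_Z2nMinus_SO2 (n : ℕ) (hn : 1 ≤ n)
    (SO2 : Subgroup O3) (hSO2 : (SO2 : Set O3) = Set.range Rz)
    (Γ : Subgroup O3)
    (hΓ : (Γ : Set O3) = ↑(Subgroup.zpowers (Rz (2 * Real.pi / (n : ℝ)))) ∪
      (fun x => negI * Rz (Real.pi / (n : ℝ)) * x) ''
        ↑(Subgroup.zpowers (Rz (2 * Real.pi / (n : ℝ))))) :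
    (∀ g : O3, g ∈ SO3 →
      (((g : Matrix (Fin 3) (Fin 3) ℝ).mulVec e3 = e3 ∨
          (g : Matrix (Fin 3) (Fin 3) ℝ).mulVec e3 = -e3) →
        Γ ⊓ conjS g (HZ SO2) = Γ) ∧
      (¬((g : Matrix (Fin 3) (Fin 3) ℝ).mulVec e3 = e3 ∨
          (g : Matrix (Fin 3) (Fin 3) ℝ).mulVec e3 = -e3) →
        Γ ⊓ conjS g (HZ SO2) = ⊥)) ∧
    clips Γ (HZ SO2) = {cclass (⊥ : Subgroup O3), cclass Γ} := by
  set α := 2 * Real.pi / (n : ℝ) with hα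
  set β := Real.pi / (n : ℝ) with hβ
  -- every element of Γ has one of two forms
  have hΓform : ∀ x ∈ Γ, (∃ k : ℤ, x = Rz (k * α)) ∨
      (∃ k : ℤ, x = negI * Rz (β + k * α)) := by
    intro x hx
    have hx' : x ∈ (Γ : Set O3) := hx
    rw [hΓ] at hx'
    rcases hx' with h | ⟨y, hy, rfl⟩
    · obtain ⟨k, hk⟩ := Subgroup.mem_zpowers_iff.mp h
      exact Or.inl ⟨k, by rw [← hk, Rz_zpow]⟩
    · obtain ⟨k, hk⟩ := Subgroup.mem_zpowers_iff.mp hy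
      refine Or.inr ⟨k, ?_⟩
      rw [← hk, Rz_zpow]
      show negI * Rz β * Rz (↑k * α) = negI * Rz (β + ↑k * α)
      rw [mul_assoc, Rz_mul]
  have hRz_SO2 : ∀ θ : ℝ, Rz θ ∈ (SO2 : Set O3) := by
    intro θ; rw [hSO2]; exact ⟨θ, rfl⟩
  have hRz_HZ : ∀ θ : ℝ, Rz θ ∈ HZ SO2 := fun θ =>
    (mem_HZ_iff SO2 _).mpr (Or.inl (hRz_SO2 θ))
  have hnegRz_HZ : ∀ θ : ℝ, negI * Rz θ ∈ HZ SO2 := fun θ =>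
    (mem_HZ_iff SO2 _).mpr (Or.inr ⟨Rz θ, hRz_SO2 θ, rfl⟩)
  have part1 : ∀ g : O3, g ∈ SO3 →
      (((g : Matrix (Fin 3) (Fin 3) ℝ).mulVec e3 = e3 ∨
          (g : Matrix (Fin 3) (Fin 3) ℝ).mulVec e3 = -e3) →
        Γ ⊓ conjS g (HZ SO2) = Γ) ∧
      (¬((g : Matrix (Fin 3) (Fin 3) ℝ).mulVec e3 = e3 ∨
          (g : Matrix (Fin 3) (Fin 3) ℝ).mulVec e3 = -e3) →
        Γ ⊓ conjS g (HZ SO2) = ⊥) := by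
    intro g hg
    have hdet : ((g : O3) : Matrix (Fin 3) (Fin 3) ℝ).det = 1 := hg
    constructor
    · -- axis preserved: intersection is Γ
      rintro (h | h) <;>
      · refine inf_eq_left.mpr ?_
        intro x hx
        rw [mem_conjS_iff]
        first
        | (have comm := entries_fix g hdet h
           rcases hΓform x hx with ⟨k, rfl⟩ | ⟨k, rfl⟩
           · exact ⟨Rz ((k:ℝ) * α), hRz_HZ _, by rw [comm ((k:ℝ) * α)]; group⟩
           · refine ⟨negI * Rz (β + (k:ℝ) * α), hnegRz_HZ _, ?_⟩
             rw [conj_negI_inner, comm (β + (k:ℝ) * α)]; group)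
        | (have comm := entries_flip g hdet h
           have comm' : ∀ θ : ℝ, g * Rz (-θ) = Rz θ * g := by
             intro θ; have := comm (-θ); rwa [neg_neg] at this
           rcases hΓform x hx with ⟨k, rfl⟩ | ⟨k, rfl⟩
           · exact ⟨Rz (-((k:ℝ) * α)), hRz_HZ _, by rw [comm' ((k:ℝ) * α)]; group⟩
           · refine ⟨negI * Rz (-(β + (k:ℝ) * α)), hnegRz_HZ _, ?_⟩
             rw [conj_negI_inner, comm' (β + (k:ℝ) * α)]; group)
    · -- axis moved: intersection is trivial
      intro hne
      rw [eq_bot_iff]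
      intro x hx
      obtain ⟨hxΓ, hxC⟩ := Subgroup.mem_inf.mp hx
      obtain ⟨y, hyK, hyx⟩ := (mem_conjS_iff g (HZ SO2) x).mp hxC
      rcases (mem_HZ_iff SO2 y).mp hyK with hy | ⟨y', hy', rfl⟩
      · -- y = Rz ψ
        obtain ⟨ψ, rfl⟩ : ∃ ψ, Rz ψ = y := by rw [hSO2] at hy; exact hy
        rcases hΓform x hxΓ with ⟨k, rfl⟩ | ⟨k, rfl⟩
        · -- Rz (kα) = g Rz ψ g⁻¹
          have heq : Rz (↑k * α) = g * Rz ψ * g⁻¹ := hyx.symm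
          obtain ⟨hc, hs⟩ := cos_one_of_conj g _ ψ hne heq
          exact Subgroup.mem_bot.mpr (Rz_eq_one _ hc hs)
        · -- det contradiction
          exfalso
          have hd1 : ((negI * Rz (β + ↑k * α) : O3) : Matrix (Fin 3) (Fin 3) ℝ).det = -1 :=
            det_negI_Rz _
          rw [← hyx] at hd1
          rw [det_conj] at hd1
          have : (RzM ψ).det = -1 := hd1
          rw [RzM_det] at this; norm_num at this
      · -- y = negI * Rz ψ
        obtain ⟨ψ, rfl⟩ : ∃ ψ, Rz ψ = y' := by rw [hSO2] at hy'; exact hy'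
        rcases hΓform x hxΓ with ⟨k, rfl⟩ | ⟨k, rfl⟩
        · exfalso
          have hd1 : ((Rz (↑k * α) : O3) : Matrix (Fin 3) (Fin 3) ℝ).det = 1 := RzM_det _
          rw [← hyx, det_conj] at hd1
          have : ((negI * Rz ψ : O3) : Matrix (Fin 3) (Fin 3) ℝ).det = -1 := det_negI_Rz _
          rw [this] at hd1; norm_num at hd1
        · exfalso
          have heq : negI * Rz (β + ↑k * α) = negI * (g * Rz ψ * g⁻¹) := by
            rw [← hyx, conj_negI_inner]
          have heq2 : Rz (β + ↑k * α) = g * Rz ψ * g⁻¹ := mul_left_cancel heq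
          obtain ⟨hc, _⟩ := cos_one_of_conj g _ ψ hne heq2
          exact parity_contra n hn k _ rfl hc
  refine ⟨part1, ?_⟩
  -- the clips set
  have hdet_pm : ∀ g : O3, ((g : O3) : Matrix (Fin 3) (Fin 3) ℝ).det = 1 ∨
      ((g : O3) : Matrix (Fin 3) (Fin 3) ℝ).det = -1 := by
    intro g
    have hu1 : star ((g : O3) : Matrix (Fin 3) (Fin 3) ℝ) * g = 1 := g.2.1
    have := congrArg Matrix.det hu1
    rw [Matrix.det_mul, Matrix.star_eq_conjTranspose, Matrix.det_conjTranspose,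
      Matrix.det_one, star_trivial] at this
    exact mul_self_eq_one_iff.mp this
  have hvals : ∀ g : O3, Γ ⊓ conjS g (HZ SO2) = ⊥ ∨ Γ ⊓ conjS g (HZ SO2) = Γ := by
    intro g
    rcases hdet_pm g with h1 | hm1
    · by_cases hcond : ((g : Matrix (Fin 3) (Fin 3) ℝ).mulVec e3 = e3 ∨
          (g : Matrix (Fin 3) (Fin 3) ℝ).mulVec e3 = -e3)
      · exact Or.inr ((part1 g h1).1 hcond)
      · exact Or.inl ((part1 g h1).2 hcond)
    · have hg' : (negI * g) ∈ SO3 := by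
        show ((negI * g : O3) : Matrix (Fin 3) (Fin 3) ℝ).det = 1
        rw [coe_negI_mul, Matrix.det_neg, hm1]
        norm_num
      rw [← conjS_negI_mul g (HZ SO2)]
      by_cases hcond : (((negI * g : O3) : Matrix (Fin 3) (Fin 3) ℝ).mulVec e3 = e3 ∨
          ((negI * g : O3) : Matrix (Fin 3) (Fin 3) ℝ).mulVec e3 = -e3)
      · exact Or.inr ((part1 (negI * g) hg').1 hcond)
      · exact Or.inl ((part1 (negI * g) hg').2 hcond)
  ext S
  simp only [clips, Set.mem_range, Set.mem_insert_iff, Set.mem_singleton_iff]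
  constructor
  · rintro ⟨g, rfl⟩
    rcases hvals g with h | h
    · left; rw [h]
    · right; rw [h]
  · rintro (rfl | rfl)
    · exact ⟨g0, by rw [(part1 g0 g0_SO3).2 g0_cond]⟩
    · exact ⟨1, by rw [(part1 1 (by show ((1:O3) : Matrix (Fin 3) (Fin 3) ℝ).det = 1; simp)).1 one_cond]⟩
end
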